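/- Consider the deterministic discrete memoryless interference channel with binary alphabets and outputs Y1 = X1 AND X2 (multiplication in {0,1}) and Y2 = X1 XOR X2. Its sum-rate capacity equals 1, its capacity region is exactly {(R1,R2) : R1 >= 0, R2 >= 0, R1 + R2 <= 1}, and moreover the maximum over product input distributions p(x1)p(x2) of min{ I(X1,X2;Y2), I(X1;Y1) + I(X2;Y2|X1) } equals 1. -/

import Mathlib

/-!
The channel is deterministic, so the error probabilities of a code count the badly decoded
message pairs. Since `Y2 = X1 ⊕ X2` together with `X2` determines `X1`, the output `y2^n`
determines both messages of every pair that is decoded correctly at both receivers, so at least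
`(1 - λ1 - λ2) M1 M2` message pairs inject into `{0,1}^n`; this forces `R1 + R2 ≤ 1`.
Conversely, time sharing attains every rate pair below that line with zero error: while `X2 = 1`
receiver 1 sees `Y1 = X1`, and while `X1 = 0` receiver 2 sees `Y2 = X2`.
For the single-letter expression, `Y2` is a function of the inputs, so
`I(X1,X2;Y2) = H(Y2) ≤ 1`, with equality for `X1 = 1` and `X2` uniform.
-/

open scoped BigOperators

noncomputable section

namespace IT

/-- A probability mass function on a finite type. -/
def IsPMF {α : Type*} [Fintype α] (p : α → ℝ) : Prop :=
  (∀ a, 0 ≤ p a) ∧ ∑ a, p a = 1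

/-- The distribution (pushforward) of a random variable `X` under the pmf `μ`
on the sample space `Ω`. -/
def distOf {Ω α : Type*} [Fintype Ω] [DecidableEq α] (μ : Ω → ℝ) (X : Ω → α) : α → ℝ :=
  fun a => ∑ ω, if X ω = a then μ ω else 0

/-- Shannon entropy (base-2 logarithms) of a pmf on a finite type.
(Recall `Real.logb 2 0 = 0`, so the `0 log 0 = 0` convention is automatic.) -/
def ent {α : Type*} [Fintype α] (p : α → ℝ) : ℝ := -∑ a, p a * Real.logb 2 (p a)

/-- Entropy `H(X)` of a finite-valued random variable `X` on `(Ω, μ)`. -/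
def H {Ω α : Type*} [Fintype Ω] [Fintype α] [DecidableEq α] (μ : Ω → ℝ) (X : Ω → α) : ℝ :=
  ent (distOf μ X)

/-- Mutual information `I(X;Y)`. -/
def MI {Ω α β : Type*} [Fintype Ω] [Fintype α] [DecidableEq α] [Fintype β] [DecidableEq β]
    (μ : Ω → ℝ) (X : Ω → α) (Y : Ω → β) : ℝ :=
  H μ X + H μ Y - H μ (fun ω => (X ω, Y ω))

/-- Conditional mutual information `I(X;Y|Z)`. -/
def CMI {Ω α β γ : Type*} [Fintype Ω] [Fintype α] [DecidableEq α] [Fintype β] [DecidableEq β]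
    [Fintype γ] [DecidableEq γ] (μ : Ω → ℝ) (X : Ω → α) (Y : Ω → β) (Z : Ω → γ) : ℝ :=
  H μ (fun ω => (X ω, Z ω)) + H μ (fun ω => (Y ω, Z ω))
    - H μ (fun ω => (X ω, Y ω, Z ω)) - H μ Z

/-- `B` is conditionally independent of `A` given `C` (a Markov chain `A - C - B`). -/
def CondIndep {Ω α β γ : Type*} [Fintype Ω] [DecidableEq α] [DecidableEq β] [DecidableEq γ]
    (μ : Ω → ℝ) (A : Ω → α) (B : Ω → β) (C : Ω → γ) : Prop :=
  ∀ a b c,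
    distOf μ (fun ω => (A ω, B ω, C ω)) (a, b, c) * distOf μ C c =
      distOf μ (fun ω => (A ω, C ω)) (a, c) * distOf μ (fun ω => (B ω, C ω)) (b, c)

variable {A1 A2 B1 B2 : Type*}

/-- A discrete memoryless interference channel with input alphabets `A1, A2` and
output alphabets `B1, B2`: every pair of inputs yields a pmf on output pairs. -/
def IsChannel [Fintype B1] [Fintype B2] (W : A1 → A2 → B1 × B2 → ℝ) : Prop :=
  ∀ x1 x2, IsPMF (W x1 x2)

/-- DMZIC with weak interference: the transition probability factorizes as
`p(y1,y2|x1,x2) = p(y2|x2) q(y1|x1,y2)`, i.e. one-sided interference together with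
the Markov chain `X2 - (X1,Y2) - Y1`. -/
def WeakZ [Fintype B1] [Fintype B2] (W : A1 → A2 → B1 × B2 → ℝ) : Prop :=
  ∃ (p2 : A2 → B2 → ℝ) (q : A1 → B2 → B1 → ℝ),
    (∀ x2, IsPMF (p2 x2)) ∧ (∀ x1 y2, IsPMF (q x1 y2)) ∧
      ∀ x1 x2 y1 y2, W x1 x2 (y1, y2) = p2 x2 y2 * q x1 y2 y1

/-- Factorization `p(y1,y2|x1,x2) = p(y2|x1,x2) q(y1|x1,y2)`, i.e. the Markov chain
`X2 - (X1,Y2) - Y1`. -/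
def ChainX2X1Y2Y1 [Fintype B1] [Fintype B2] (W : A1 → A2 → B1 × B2 → ℝ) : Prop :=
  ∃ (pa : A1 → A2 → B2 → ℝ) (q : A1 → B2 → B1 → ℝ),
    (∀ x1 x2, IsPMF (pa x1 x2)) ∧ (∀ x1 y2, IsPMF (q x1 y2)) ∧
      ∀ x1 x2 y1 y2, W x1 x2 (y1, y2) = pa x1 x2 y2 * q x1 y2 y1

/-- The `n`-fold memoryless extension of the channel `W`. -/
def nFold (W : A1 → A2 → B1 × B2 → ℝ) (n : ℕ) (a : Fin n → A1) (b : Fin n → A2)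
    (y : (Fin n → B1) × (Fin n → B2)) : ℝ :=
  ∏ i, W (a i) (b i) (y.1 i, y.2 i)

/-- An `(n, M1, M2)` code for the interference channel. -/
structure Code (A1 A2 B1 B2 : Type*) (n M1 M2 : ℕ) where
  enc1 : Fin M1 → Fin n → A1
  enc2 : Fin M2 → Fin n → A2
  dec1 : (Fin n → B1) → Fin M1
  dec2 : (Fin n → B2) → Fin M2

/-- Average probability of error at receiver 1 (messages uniform and independent). -/
def err1 [Fintype B1] [Fintype B2] (W : A1 → A2 → B1 × B2 → ℝ) {n M1 M2 : ℕ}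
    (c : Code A1 A2 B1 B2 n M1 M2) : ℝ :=
  ((M1 : ℝ) * (M2 : ℝ))⁻¹ *
    ∑ w1 : Fin M1, ∑ w2 : Fin M2, ∑ y : (Fin n → B1) × (Fin n → B2),
      if c.dec1 y.1 ≠ w1 then nFold W n (c.enc1 w1) (c.enc2 w2) y else 0

/-- Average probability of error at receiver 2 (messages uniform and independent). -/
def err2 [Fintype B1] [Fintype B2] (W : A1 → A2 → B1 × B2 → ℝ) {n M1 M2 : ℕ}
    (c : Code A1 A2 B1 B2 n M1 M2) : ℝ :=
  ((M1 : ℝ) * (M2 : ℝ))⁻¹ *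
    ∑ w1 : Fin M1, ∑ w2 : Fin M2, ∑ y : (Fin n → B1) × (Fin n → B2),
      if c.dec2 y.2 ≠ w2 then nFold W n (c.enc1 w1) (c.enc2 w2) y else 0

/-- A (nonnegative) rate pair `(R1, R2)` is achievable if there are codes of blocklength `n`,
with at least `2 ^ (n R1)` and `2 ^ (n R2)` messages, whose average error probabilities at
the two receivers can be made arbitrarily small. -/
def Achievable [Fintype B1] [Fintype B2] (W : A1 → A2 → B1 × B2 → ℝ) (R1 R2 : ℝ) : Prop :=
  0 ≤ R1 ∧ 0 ≤ R2 ∧ ∀ ε : ℝ, 0 < ε →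
    ∃ (n M1 M2 : ℕ) (c : Code A1 A2 B1 B2 n M1 M2), 0 < n ∧
      (2 : ℝ) ^ ((n : ℝ) * R1) ≤ (M1 : ℝ) ∧ (2 : ℝ) ^ ((n : ℝ) * R2) ≤ (M2 : ℝ) ∧
      err1 W c ≤ ε ∧ err2 W c ≤ ε

/-- The sum-rate capacity: the supremum of `R1 + R2` over achievable rate pairs. -/
def sumCapacity [Fintype B1] [Fintype B2] (W : A1 → A2 → B1 × B2 → ℝ) : ℝ :=
  sSup {r : ℝ | ∃ R1 R2 : ℝ, Achievable W R1 R2 ∧ r = R1 + R2}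

/-- The capacity region: the closure of the set of achievable rate pairs. -/
def capacityRegion [Fintype B1] [Fintype B2] (W : A1 → A2 → B1 × B2 → ℝ) : Set (ℝ × ℝ) :=
  closure {p : ℝ × ℝ | Achievable W p.1 p.2}

/-- The joint pmf of `(X1, X2, Y1, Y2)` when the product input `p1 × p2` is fed to `W`. -/
def jointOf (W : A1 → A2 → B1 × B2 → ℝ) (p1 : A1 → ℝ) (p2 : A2 → ℝ) :
    A1 × A2 × B1 × B2 → ℝ :=
  fun z => p1 z.1 * p2 z.2.1 * W z.1 z.2.1 (z.2.2.1, z.2.2.2)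

/-- Coordinate projections on `A1 × A2 × B1 × B2`. -/
def pX1 : A1 × A2 × B1 × B2 → A1 := fun z => z.1
def pX2 : A1 × A2 × B1 × B2 → A2 := fun z => z.2.1
def pY1 : A1 × A2 × B1 × B2 → B1 := fun z => z.2.2.1
def pY2 : A1 × A2 × B1 × B2 → B2 := fun z => z.2.2.2

/-- The binary entropy function (base-2 logarithms). -/
def h2 (t : ℝ) : ℝ := -(t * Real.logb 2 t) - (1 - t) * Real.logb 2 (1 - t)

end IT

namespace IT

/-- The deterministic DMIC `Y1 = X1 AND X2`, `Y2 = X1 XOR X2`. -/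
def WAndXor : Bool → Bool → Bool × Bool → ℝ :=
  fun x1 x2 y => if y.1 = (x1 && x2) ∧ y.2 = xor x1 x2 then 1 else 0

open Finset

section Deterministic

variable {A1 A2 B1 B2 B : Type*} {n M1 M2 : ℕ}

def Code.out (c : Code A1 A2 B1 B2 n M1 M2) (f : A1 → A2 → B) (w1 : Fin M1) (w2 : Fin M2) :
    Fin n → B :=
  fun i => f (c.enc1 w1 i) (c.enc2 w2 i)

lemma card_correctlyDecoded_le [Fintype B2] {f : A1 → A2 → B1} {g : A1 → A2 → B2}
    (hg : ∀ x2, Function.Injective (g · x2)) (c : Code A1 A2 B1 B2 n M1 M2) :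
    #{p : Fin M1 × Fin M2 | c.dec1 (c.out f p.1 p.2) = p.1 ∧ c.dec2 (c.out g p.1 p.2) = p.2}
      ≤ Fintype.card B2 ^ n := by
  refine (card_le_card_of_injOn (t := univ) (fun p => c.out g p.1 p.2) (by simp) ?_).trans_eq
    (by simp)
  rintro ⟨w1, w2⟩ hp ⟨w1', w2'⟩ hq hout
  simp only [coe_filter, mem_univ, true_and, Set.mem_ofPred_eq] at hp hq
  dsimp only at hout
  obtain rfl : w2 = w2' := hp.2.symm.trans ((congrArg c.dec2 hout).trans hq.2)
  have henc : c.enc1 w1 = c.enc1 w1' := funext fun i => hg _ (congrFun hout i)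
  have hout1 : c.out f w1 w2 = c.out f w1' w2 := by unfold Code.out; rw [henc]
  exact Prod.ext (hp.1.symm.trans ((congrArg c.dec1 hout1).trans hq.1)) rfl

variable [DecidableEq B1] [DecidableEq B2]

def detChannel (f : A1 → A2 → B1) (g : A1 → A2 → B2) : A1 → A2 → B1 × B2 → ℝ :=
  fun x1 x2 y => if y = (f x1 x2, g x1 x2) then 1 else 0

lemma WAndXor_eq_detChannel : WAndXor = detChannel (· && ·) xor := by
  funext x1 x2 y
  simp only [WAndXor, detChannel, Prod.ext_iff]

lemma nFold_detChannel (f : A1 → A2 → B1) (g : A1 → A2 → B2) (a : Fin n → A1) (b : Fin n → A2)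
    (y : (Fin n → B1) × (Fin n → B2)) :
    nFold (detChannel f g) n a b y =
      if y = (fun i => f (a i) (b i), fun i => g (a i) (b i)) then 1 else 0 := by
  simp only [nFold, detChannel, prod_boole, mem_univ, true_implies, Prod.ext_iff, funext_iff,
    forall_and]

variable [Fintype B1] [Fintype B2]

lemma sum_ite_nFold_detChannel (f : A1 → A2 → B1) (g : A1 → A2 → B2)
    (c : Code A1 A2 B1 B2 n M1 M2) (w1 : Fin M1) (w2 : Fin M2)
    (P : (Fin n → B1) × (Fin n → B2) → Prop) [DecidablePred P] :
    ∑ y, (if P y then nFold (detChannel f g) n (c.enc1 w1) (c.enc2 w2) y else 0) =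
      if P (c.out f w1 w2, c.out g w1 w2) then 1 else 0 := by
  have h : ∀ y, (if P y then nFold (detChannel f g) n (c.enc1 w1) (c.enc2 w2) y else 0) =
      if y = (c.out f w1 w2, c.out g w1 w2) then (if P y then 1 else 0) else 0 := by
    intro y
    simp only [nFold_detChannel, ← ite_and, and_comm]
    rfl
  simp only [h, sum_ite_eq', mem_univ, if_true]

lemma err1_detChannel (f : A1 → A2 → B1) (g : A1 → A2 → B2) (c : Code A1 A2 B1 B2 n M1 M2) :
    err1 (detChannel f g) c =
      ((M1 : ℝ) * M2)⁻¹ * #{p : Fin M1 × Fin M2 | c.dec1 (c.out f p.1 p.2) ≠ p.1} := by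
  simp only [err1, sum_ite_nFold_detChannel]
  rw [← sum_boole, Fintype.sum_prod_type]

lemma err2_detChannel (f : A1 → A2 → B1) (g : A1 → A2 → B2) (c : Code A1 A2 B1 B2 n M1 M2) :
    err2 (detChannel f g) c =
      ((M1 : ℝ) * M2)⁻¹ * #{p : Fin M1 × Fin M2 | c.dec2 (c.out g p.1 p.2) ≠ p.2} := by
  simp only [err2, sum_ite_nFold_detChannel]
  rw [← sum_boole, Fintype.sum_prod_type]

lemma one_sub_err_mul_le_card_pow {f : A1 → A2 → B1} {g : A1 → A2 → B2}
    (hg : ∀ x2, Function.Injective (g · x2)) (c : Code A1 A2 B1 B2 n M1 M2) :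
    (1 - (err1 (detChannel f g) c + err2 (detChannel f g) c)) * ((M1 : ℝ) * M2)
      ≤ (Fintype.card B2 : ℝ) ^ n := by
  rcases eq_or_ne ((M1 : ℝ) * M2) 0 with hM | hM
  · rw [hM, mul_zero]
    positivity
  set good := ({p | c.dec1 (c.out f p.1 p.2) = p.1 ∧ c.dec2 (c.out g p.1 p.2) = p.2} :
    Finset (Fin M1 × Fin M2))
  set bad1 := ({p | c.dec1 (c.out f p.1 p.2) ≠ p.1} : Finset (Fin M1 × Fin M2))
  set bad2 := ({p | c.dec2 (c.out g p.1 p.2) ≠ p.2} : Finset (Fin M1 × Fin M2))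
  have hcover : M1 * M2 ≤ #good + #bad1 + #bad2 := calc
    M1 * M2 = #(univ : Finset (Fin M1 × Fin M2)) := by simp
    _ ≤ #(good ∪ bad1 ∪ bad2) := card_le_card fun p _ => by
      simp only [good, bad1, bad2, mem_union, mem_filter, mem_univ, true_and]
      tauto
    _ ≤ #good + #bad1 + #bad2 := (card_union_le _ _).trans (by gcongr; exact card_union_le _ _)
  have hgood : (#good : ℝ) ≤ (Fintype.card B2 : ℝ) ^ n := by
    exact_mod_cast card_correctlyDecoded_le hg c
  have hcover' : (M1 : ℝ) * M2 ≤ #good + #bad1 + #bad2 := by exact_mod_cast hcover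
  rw [err1_detChannel, err2_detChannel, ← mul_add, sub_mul, one_mul, mul_comm _⁻¹,
    inv_mul_cancel_right₀ hM]
  linarith

end Deterministic

section Rates

variable {A1 A2 B1 B2 : Type*} [Fintype B1] [Fintype B2]

lemma add_le_one_of_achievable {W : A1 → A2 → B1 × B2 → ℝ}
    (hcount : ∀ (n M1 M2 : ℕ) (c : Code A1 A2 B1 B2 n M1 M2),
      (1 - (err1 W c + err2 W c)) * ((M1 : ℝ) * M2) ≤ 2 ^ n)
    {R1 R2 : ℝ} (h : Achievable W R1 R2) : R1 + R2 ≤ 1 := by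
  by_contra! hs
  obtain ⟨-, -, hcodes⟩ := h
  set q : ℝ := 2 ^ (R1 + R2 - 1)
  have hq : 1 < q := Real.one_lt_rpow one_lt_two (by linarith)
  set ε : ℝ := (1 - q⁻¹) / 4 with hεdef
  have hε : 0 < ε := by have := inv_lt_one_of_one_lt₀ hq; positivity
  obtain ⟨n, M1, M2, c, hn, hM1, hM2, he1, he2⟩ := hcodes ε hε
  have hn1 : (1 : ℝ) ≤ n := by exact_mod_cast hn
  have hpow : (2 : ℝ) ^ ((n : ℝ) * (R1 + R2)) = 2 ^ n * 2 ^ ((n : ℝ) * (R1 + R2 - 1)) := by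
    rw [← Real.rpow_natCast, ← Real.rpow_add two_pos]
    ring_nf
  have hqn : q ≤ 2 ^ ((n : ℝ) * (R1 + R2 - 1)) :=
    Real.rpow_le_rpow_of_exponent_le one_le_two (by nlinarith)
  have hMM : (2 : ℝ) ^ ((n : ℝ) * (R1 + R2)) ≤ M1 * M2 := by
    rw [mul_add, Real.rpow_add two_pos]
    exact mul_le_mul hM1 hM2 (by positivity) (by positivity)
  have h2n : (0 : ℝ) < 2 ^ n := by positivity
  have hεq : (1 - 2 * ε) * q = (q + 1) / 2 := by
    rw [hεdef]
    field_simp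
    ring
  have h2ε : 0 < 1 - 2 * ε := by linarith [inv_pos.2 (zero_lt_one.trans hq)]
  have : (2 : ℝ) ^ n < 2 ^ n := calc
    (2 : ℝ) ^ n < (1 - 2 * ε) * (2 ^ n * q) := by rw [mul_left_comm, hεq]; nlinarith
    _ ≤ (1 - 2 * ε) * 2 ^ ((n : ℝ) * (R1 + R2)) := by rw [hpow]; gcongr
    _ ≤ (1 - (err1 W c + err2 W c)) * (M1 * M2) :=
      mul_le_mul (by linarith) hMM (by positivity) (by linarith)
    _ ≤ 2 ^ n := hcount n M1 M2 c
  exact lt_irrefl _ this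

end Rates

section TimeSharing

def bitsEquiv (k : ℕ) : (Fin k → Bool) ≃ Fin (2 ^ k) := Fintype.equivFinOfCardEq (by simp)

def timeSharingCode (k m : ℕ) : Code Bool Bool Bool Bool (k + m) (2 ^ k) (2 ^ m) where
  enc1 w1 := Fin.append ((bitsEquiv k).symm w1) fun _ => false
  enc2 w2 := Fin.append (fun _ => true) ((bitsEquiv m).symm w2)
  dec1 y := bitsEquiv k fun i => y (Fin.castAdd m i)
  dec2 y := bitsEquiv m fun j => y (Fin.natAdd k j)

lemma timeSharingCode_dec1 (k m : ℕ) (w1 : Fin (2 ^ k)) (w2 : Fin (2 ^ m)) :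
    (timeSharingCode k m).dec1 ((timeSharingCode k m).out (· && ·) w1 w2) = w1 := by
  simp [timeSharingCode, Code.out]

lemma timeSharingCode_dec2 (k m : ℕ) (w1 : Fin (2 ^ k)) (w2 : Fin (2 ^ m)) :
    (timeSharingCode k m).dec2 ((timeSharingCode k m).out xor w1 w2) = w2 := by
  simp [timeSharingCode, Code.out]

lemma err1_timeSharingCode (k m : ℕ) : err1 WAndXor (timeSharingCode k m) = 0 := by
  simp [WAndXor_eq_detChannel, err1_detChannel, timeSharingCode_dec1]

lemma err2_timeSharingCode (k m : ℕ) : err2 WAndXor (timeSharingCode k m) = 0 := by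
  simp [WAndXor_eq_detChannel, err2_detChannel, timeSharingCode_dec2]

lemma achievable_WAndXor_of_mul_le {R1 R2 : ℝ} (h1 : 0 ≤ R1) (h2 : 0 ≤ R2) {k m : ℕ}
    (hkm : 0 < k + m) (hk : (k + m : ℝ) * R1 ≤ k) (hm : (k + m : ℝ) * R2 ≤ m) :
    Achievable WAndXor R1 R2 := by
  have hrate : ∀ {R : ℝ} {j : ℕ}, (k + m : ℝ) * R ≤ j → (2 : ℝ) ^ ((k + m : ℕ) * R) ≤ (2 ^ j : ℕ) :=
    fun h => by
      rw [Nat.cast_pow, Nat.cast_ofNat, ← Real.rpow_natCast]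
      exact Real.rpow_le_rpow_of_exponent_le one_le_two (by exact_mod_cast h)
  refine ⟨h1, h2, fun ε hε => ⟨k + m, 2 ^ k, 2 ^ m, timeSharingCode k m, hkm, hrate hk, hrate hm,
    ?_, ?_⟩⟩
  · rw [err1_timeSharingCode]; exact hε.le
  · rw [err2_timeSharingCode]; exact hε.le

lemma achievable_WAndXor_of_add_lt_one {R1 R2 : ℝ} (h1 : 0 ≤ R1) (h2 : 0 ≤ R2) (hs : R1 + R2 < 1) :
    Achievable WAndXor R1 R2 := by
  have hδ : 0 < 1 - R1 - R2 := by linarith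
  obtain ⟨N, hN⟩ := exists_nat_gt (1 - R1 - R2)⁻¹
  have hNδ : 1 < N * (1 - R1 - R2) := by rwa [← inv_lt_iff_one_lt_mul₀ hδ]
  obtain ⟨k, hk, hk'⟩ : ∃ k : ℕ, N * R1 ≤ k ∧ (k : ℝ) < N * R1 + 1 :=
    ⟨_, Nat.le_ceil _, Nat.ceil_lt_add_one (by positivity)⟩
  obtain ⟨m, rfl⟩ := Nat.exists_eq_add_of_le (by exact_mod_cast (by nlinarith : (k : ℝ) ≤ N))
  push_cast at hN hNδ hk hk'
  exact achievable_WAndXor_of_mul_le h1 h2 (by exact_mod_cast (inv_pos.2 hδ).trans hN) hk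
    (by nlinarith)

end TimeSharing

lemma add_le_one_of_achievable_WAndXor {R1 R2 : ℝ} (h : Achievable WAndXor R1 R2) :
    R1 + R2 ≤ 1 := by
  refine add_le_one_of_achievable (fun n M1 M2 c => ?_) h
  have hcount := one_sub_err_mul_le_card_pow (f := (· && ·)) (g := xor)
    (fun _ _ _ h => Bool.xor_left_inj.1 h) c
  rwa [← WAndXor_eq_detChannel, Fintype.card_bool, Nat.cast_ofNat] at hcount

lemma sumCapacity_WAndXor : sumCapacity WAndXor = 1 :=
  IsGreatest.csSup_eq ⟨⟨1, 0, achievable_WAndXor_of_mul_le zero_le_one le_rfl (k := 1) (m := 0)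
    one_pos (by norm_num) (by norm_num), by ring⟩,
    by rintro _ ⟨R1, R2, h, rfl⟩; exact add_le_one_of_achievable_WAndXor h⟩

lemma isClosed_triangle : IsClosed {p : ℝ × ℝ | 0 ≤ p.1 ∧ 0 ≤ p.2 ∧ p.1 + p.2 ≤ 1} :=
  (isClosed_le continuous_const continuous_fst).inter
    ((isClosed_le continuous_const continuous_snd).inter
      (isClosed_le (continuous_fst.add continuous_snd) continuous_const))

/-- Every point of the triangle is a limit of shrunken copies `t • p`, `t < 1`, which lie strictly
below the line `R1 + R2 = 1`. -/
lemma capacityRegion_WAndXor :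
    capacityRegion WAndXor = {p : ℝ × ℝ | 0 ≤ p.1 ∧ 0 ≤ p.2 ∧ p.1 + p.2 ≤ 1} := by
  refine (closure_minimal ?_ isClosed_triangle).antisymm ?_
  · exact fun p h => ⟨h.1, h.2.1, add_le_one_of_achievable_WAndXor h⟩
  rintro p ⟨hp1, hp2, hp⟩
  have hlim : Filter.Tendsto (fun t : ℝ => t • p) (nhdsWithin 1 (Set.Iio 1)) (nhds p) := by
    have h := (Filter.tendsto_id (x := nhds (1 : ℝ))).smul_const p
    rw [one_smul] at h
    exact h.mono_left nhdsWithin_le_nhds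
  refine mem_closure_of_tendsto hlim (Filter.mem_of_superset (Ioo_mem_nhdsLT one_pos) ?_)
  rintro t ⟨ht0, ht1⟩
  refine achievable_WAndXor_of_add_lt_one (by simpa using mul_nonneg ht0.le hp1)
    (by simpa using mul_nonneg ht0.le hp2) ?_
  simp only [Prod.smul_fst, Prod.smul_snd, smul_eq_mul, ← mul_add]
  nlinarith

section Entropy

variable {Ω α β : Type*} [Fintype Ω] [DecidableEq α] [DecidableEq β]

lemma ent_le_one_of_sum_bool {q : Bool → ℝ} (hq : ∑ b, q b = 1) : ent q ≤ 1 := by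
  rw [Fintype.sum_bool] at hq
  have hent : ent q = Real.binEntropy (q true) / Real.log 2 := by
    rw [ent, Fintype.sum_bool, show q false = 1 - q true by linarith,
      Real.binEntropy_eq_negMulLog_add_negMulLog_one_sub]
    simp only [Real.negMulLog, Real.logb]
    ring
  rw [hent, div_le_one (Real.log_pos one_lt_two)]
  exact Real.binEntropy_le_log_two

lemma sum_distOf [Fintype α] (μ : Ω → ℝ) (X : Ω → α) : ∑ a, distOf μ X a = ∑ ω, μ ω := by
  simp only [distOf]
  rw [sum_comm]
  simp

lemma distOf_prod_of_eq_comp (μ : Ω → ℝ) {X : Ω → α} {Y : Ω → β} {φ : α → β}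
    (hY : ∀ ω, μ ω ≠ 0 → Y ω = φ (X ω)) (a : α) (b : β) :
    distOf μ (fun ω => (X ω, Y ω)) (a, b) = if φ a = b then distOf μ X a else 0 := by
  simp only [distOf, Prod.ext_iff]
  split_ifs with hb
  · refine sum_congr rfl fun ω _ => ?_
    rcases eq_or_ne (μ ω) 0 with h | h
    · simp [h]
    · by_cases hx : X ω = a <;> simp [hx, hY ω h, hb]
  · refine sum_eq_zero fun ω _ => ?_
    rcases eq_or_ne (μ ω) 0 with h | h
    · simp [h]
    · rw [if_neg]
      rintro ⟨rfl, rfl⟩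
      exact hb (hY ω h).symm

lemma H_prod_of_eq_comp [Fintype α] [Fintype β] (μ : Ω → ℝ) {X : Ω → α} {Y : Ω → β} {φ : α → β}
    (hY : ∀ ω, μ ω ≠ 0 → Y ω = φ (X ω)) : H μ (fun ω => (X ω, Y ω)) = H μ X := by
  simp only [H, ent, Fintype.sum_prod_type, distOf_prod_of_eq_comp μ hY]
  congr 1
  refine sum_congr rfl fun a _ => ?_
  simp [apply_ite (fun t : ℝ => t * Real.logb 2 t)]

lemma MI_of_eq_comp [Fintype α] [Fintype β] (μ : Ω → ℝ) {X : Ω → α} {Y : Ω → β} {φ : α → β}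
    (hY : ∀ ω, μ ω ≠ 0 → Y ω = φ (X ω)) : MI μ X Y = H μ Y := by
  rw [MI, H_prod_of_eq_comp μ hY]
  ring

end Entropy

section ProductInput

variable {A1 A2 B1 B2 : Type*}

lemma sum_jointOf [Fintype A1] [Fintype A2] [Fintype B1] [Fintype B2]
    {W : A1 → A2 → B1 × B2 → ℝ} (hW : ∀ x1 x2, ∑ y, W x1 x2 y = 1)
    {p1 : A1 → ℝ} {p2 : A2 → ℝ} (hp1 : ∑ a, p1 a = 1) (hp2 : ∑ a, p2 a = 1) :
    ∑ z, jointOf W p1 p2 z = 1 := by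
  simp only [jointOf, Fintype.sum_prod_type, ← mul_sum, hW, mul_one, hp1, hp2]

variable [DecidableEq B1] [DecidableEq B2]

lemma sum_detChannel [Fintype B1] [Fintype B2] (f : A1 → A2 → B1) (g : A1 → A2 → B2)
    (x1 : A1) (x2 : A2) : ∑ y, detChannel f g x1 x2 y = 1 := by
  simp [detChannel]

lemma pY2_eq_of_jointOf_detChannel_ne_zero {f : A1 → A2 → B1} {g : A1 → A2 → B2}
    {p1 : A1 → ℝ} {p2 : A2 → ℝ} {z : A1 × A2 × B1 × B2}
    (hz : jointOf (detChannel f g) p1 p2 z ≠ 0) : pY2 z = g (pX1 z) (pX2 z) := by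
  unfold jointOf detChannel at hz
  split_ifs at hz with h
  · exact (Prod.ext_iff.1 h).2
  · simp at hz

lemma MI_jointOf_detChannel_pY2_le_one [Fintype A1] [DecidableEq A1] [Fintype A2] [DecidableEq A2]
    [Fintype B1] {f : A1 → A2 → B1} {g : A1 → A2 → Bool} {p1 : A1 → ℝ} {p2 : A2 → ℝ}
    (hp1 : ∑ a, p1 a = 1) (hp2 : ∑ a, p2 a = 1) :
    MI (jointOf (detChannel f g) p1 p2) (fun z => (pX1 z, pX2 z)) pY2 ≤ 1 := by
  rw [MI_of_eq_comp _ (φ := fun x => g x.1 x.2) fun _ hz => pY2_eq_of_jointOf_detChannel_ne_zero hz]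
  exact ent_le_one_of_sum_bool (by rw [sum_distOf, sum_jointOf (sum_detChannel f g) hp1 hp2])

end ProductInput

/-- With `X1 = 1` and `X2` uniform, `Y1 = X2` and `Y2 = ¬X2` are both uniform bits. -/
lemma min_MI_eq_one_at_witness :
    min (MI (jointOf WAndXor (fun b => if b then 1 else 0) fun _ => 1 / 2)
          (fun z => (pX1 z, pX2 z)) pY2)
        (MI (jointOf WAndXor (fun b => if b then 1 else 0) fun _ => 1 / 2) pX1 pY1
          + CMI (jointOf WAndXor (fun b => if b then 1 else 0) fun _ => 1 / 2) pX2 pY2 pX1)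
      = 1 := by
  simp only [MI, CMI, H, ent, distOf, jointOf, WAndXor, pX1, pX2, pY1, pY2,
    Fintype.sum_prod_type, Fintype.sum_bool]
  norm_num
  rw [one_div, Real.logb_inv, Real.logb_self_eq_one one_lt_two]
  norm_num

/-- For the deterministic DMIC `Y1 = X1 AND X2`, `Y2 = X1 XOR X2`:
the sum-rate capacity is `1`, the capacity region is
`{(R1,R2) : R1 ≥ 0, R2 ≥ 0, R1 + R2 ≤ 1}`, and the maximum over product inputs of
`min{I(X1,X2;Y2), I(X1;Y1) + I(X2;Y2|X1)}` equals `1`. -/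
theorem and_xor_capacity :
    sumCapacity WAndXor = 1
    ∧ capacityRegion WAndXor = {p : ℝ × ℝ | 0 ≤ p.1 ∧ 0 ≤ p.2 ∧ p.1 + p.2 ≤ 1}
    ∧ IsGreatest
        {v : ℝ | ∃ p1 p2 : Bool → ℝ, IsPMF p1 ∧ IsPMF p2 ∧
          v = min (MI (jointOf WAndXor p1 p2) (fun z => (pX1 z, pX2 z)) pY2)
                  (MI (jointOf WAndXor p1 p2) pX1 pY1
                    + CMI (jointOf WAndXor p1 p2) pX2 pY2 pX1)}
        1 := by
  refine ⟨sumCapacity_WAndXor, capacityRegion_WAndXor,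
    ⟨_, _, ?_, ?_, min_MI_eq_one_at_witness.symm⟩, ?_⟩
  · exact ⟨fun b => by positivity, by simp⟩
  · exact ⟨fun _ => by positivity, by norm_num⟩
  · rintro v ⟨p1, p2, hp1, hp2, rfl⟩
    rw [WAndXor_eq_detChannel]
    exact (min_le_left _ _).trans (MI_jointOf_detChannel_pY2_le_one hp1.2 hp2.2)

end IT
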